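/- In the block LQ factorization of the stacked matrix col(U_p, Y_p, U_f, Y_f) = L·Q with L lower block-triangular (diagonal blocks invertible) and Q orthogonal with block rows Q1, Q2, Q3, let Φ = col(U_p, Y_p, U_f) and Π = Φ†Φ. Then I − Π = Q3ᵀQ3 and Y_f(I−Π) = L33 Q3, hence L33 L33ᵀ = Y_f(I−Π)Y_fᵀ. -/
import Mathlib


open Matrix

/-- `Ad` is the Moore–Penrose pseudoinverse of `A` (four Penrose conditions). -/
def IsMoorePenrose {m n : ℕ} (A : Matrix (Fin m) (Fin n) ℝ)
    (Ad : Matrix (Fin n) (Fin m) ℝ) : Prop :=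
  A * Ad * A = A ∧ Ad * A * Ad = Ad ∧ (A * Ad)ᵀ = A * Ad ∧ (Ad * A)ᵀ = Ad * A

/-- Block-LQ view of the stacked data matrix: `Φ = M1 · col(Q1,Q2)` with `M1` invertible,
`Y_f = L31 Q1 + L32 Q2 + L33 Q3`, and the rows of `Q1, Q2, Q3` together form an
orthonormal basis of `ℝⁿ`. With `Π = Φ†Φ` we get `I − Π = Q3ᵀQ3`,
`Y_f(I−Π) = L33 Q3`, and `L33 L33ᵀ = Y_f(I−Π)Y_fᵀ`. -/
theorem stmt5 {m1 m2 m3 p n : ℕ}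
    (Q1 : Matrix (Fin m1) (Fin n) ℝ) (Q2 : Matrix (Fin m2) (Fin n) ℝ)
    (Q3 : Matrix (Fin m3) (Fin n) ℝ)
    (h11 : Q1 * Q1ᵀ = 1) (h22 : Q2 * Q2ᵀ = 1) (h33 : Q3 * Q3ᵀ = 1)
    (h12 : Q1 * Q2ᵀ = 0) (h13 : Q1 * Q3ᵀ = 0) (h23 : Q2 * Q3ᵀ = 0)
    (hcomplete : Q1ᵀ * Q1 + Q2ᵀ * Q2 + Q3ᵀ * Q3 = 1)
    (Φ : Matrix (Fin (m1 + m2)) (Fin n) ℝ) (M1 : Matrix (Fin (m1 + m2)) (Fin (m1 + m2)) ℝ)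
    (hM1 : IsUnit M1)
    (hΦ : Φ = M1 * ((fromRows Q1 Q2).submatrix finSumFinEquiv.symm id))
    (L31 : Matrix (Fin p) (Fin m1) ℝ) (L32 : Matrix (Fin p) (Fin m2) ℝ)
    (L33 : Matrix (Fin p) (Fin m3) ℝ)
    (Yf : Matrix (Fin p) (Fin n) ℝ) (hYf : Yf = L31 * Q1 + L32 * Q2 + L33 * Q3)
    (Φd : Matrix (Fin n) (Fin (m1 + m2)) ℝ) (hMP : IsMoorePenrose Φ Φd)
    (P : Matrix (Fin n) (Fin n) ℝ) (hP : P = Φd * Φ) :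
    (1 - P = Q3ᵀ * Q3) ∧ (Yf * (1 - P) = L33 * Q3) ∧
      (L33 * L33ᵀ = Yf * (1 - P) * Yfᵀ) := by
  obtain ⟨hmp1, hmp2, hmp3, hmp4⟩ := hMP
  set R : Matrix (Fin (m1 + m2)) (Fin n) ℝ :=
    (fromRows Q1 Q2).submatrix finSumFinEquiv.symm id with hR
  set E : Matrix (Fin n) (Fin n) ℝ := Q1ᵀ * Q1 + Q2ᵀ * Q2 with hE
  -- Rᵀ R = E
  have hRtR : Rᵀ * R = E := by
    rw [hR, transpose_submatrix]
    have := submatrix_mul_equiv (fromRows Q1 Q2)ᵀ (fromRows Q1 Q2)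
      (id : Fin n → Fin n) finSumFinEquiv.symm (id : Fin n → Fin n)
    rw [this, submatrix_id_id, transpose_fromRows, fromCols_mul_fromRows, hE]
  -- R E = R
  have hRE : R * E = R := by
    have h1 : Q1 * E = Q1 := by
      rw [hE, Matrix.mul_add, ← Matrix.mul_assoc, ← Matrix.mul_assoc, h11, h12,
        Matrix.one_mul, Matrix.zero_mul, add_zero]
    have h2 : Q2 * E = Q2 := by
      rw [hE, Matrix.mul_add, ← Matrix.mul_assoc, ← Matrix.mul_assoc, h22,
        (by rw [← transpose_transpose (Q2 * Q1ᵀ), transpose_mul, transpose_transpose, h12,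
          transpose_zero] : Q2 * Q1ᵀ = 0),
        Matrix.one_mul, Matrix.zero_mul, zero_add]
    have : R * E = ((fromRows Q1 Q2) * E).submatrix finSumFinEquiv.symm id := by
      rw [hR, ← submatrix_id_id ((fromRows Q1 Q2) * E)]
      exact (submatrix_mul_equiv (fromRows Q1 Q2) E finSumFinEquiv.symm
        (Equiv.refl (Fin n)) id).symm
    rw [this, fromRows_mul, h1, h2, hR]
  -- Φ E = Φ
  have hΦE : Φ * E = Φ := by rw [hΦ, Matrix.mul_assoc, hRE]
  -- P E = P
  have hPE : P * E = P := by rw [hP, Matrix.mul_assoc, hΦE]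
  -- E P = E
  have hEP : E * P = E := by
    have hdet : IsUnit M1.det := (Matrix.isUnit_iff_isUnit_det M1).mp hM1
    have hRinv : R = M1⁻¹ * Φ := by
      rw [hΦ, ← Matrix.mul_assoc, Matrix.nonsing_inv_mul M1 hdet, Matrix.one_mul]
    calc E * P = Rᵀ * R * (Φd * Φ) := by rw [hRtR, hP]
      _ = Rᵀ * (M1⁻¹ * (Φ * Φd * Φ)) := by
          rw [hRinv]; simp only [Matrix.mul_assoc]
      _ = Rᵀ * (M1⁻¹ * Φ) := by rw [hmp1]
      _ = E := by rw [← hRinv, hRtR]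
  -- P = E
  have hPeqE : P = E := by
    have hEsymm : Eᵀ = E := by
      rw [hE, transpose_add, transpose_mul, transpose_mul, transpose_transpose,
        transpose_transpose]
    have hPsymm : Pᵀ = P := by rw [hP]; exact hmp4
    conv_lhs => rw [← hPsymm, ← hPE]
    rw [transpose_mul, hEsymm, hPsymm, hEP]
  have key : (1 : Matrix (Fin n) (Fin n) ℝ) - P = Q3ᵀ * Q3 := by
    rw [← hcomplete, hPeqE, hE]; abel
  have h31 : Q3 * Q1ᵀ = 0 := by
    rw [← transpose_transpose (Q3 * Q1ᵀ), transpose_mul, transpose_transpose, h13,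
      transpose_zero]
  have h32 : Q3 * Q2ᵀ = 0 := by
    rw [← transpose_transpose (Q3 * Q2ᵀ), transpose_mul, transpose_transpose, h23,
      transpose_zero]
  have key2 : Yf * (1 - P) = L33 * Q3 := by
    rw [key, hYf, Matrix.add_mul, Matrix.add_mul, Matrix.mul_assoc, Matrix.mul_assoc,
      Matrix.mul_assoc, ← Matrix.mul_assoc Q1, ← Matrix.mul_assoc Q2, ← Matrix.mul_assoc Q3,
      h13, h23, h33, Matrix.zero_mul, Matrix.zero_mul, Matrix.one_mul, Matrix.mul_zero,
      Matrix.mul_zero, zero_add, zero_add]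
  refine ⟨key, key2, ?_⟩
  rw [key2, hYf, transpose_add, transpose_add, transpose_mul, transpose_mul, transpose_mul,
    Matrix.mul_add, Matrix.mul_add, Matrix.mul_assoc, Matrix.mul_assoc, Matrix.mul_assoc,
    ← Matrix.mul_assoc Q3 Q1ᵀ, ← Matrix.mul_assoc Q3 Q2ᵀ, ← Matrix.mul_assoc Q3 Q3ᵀ,
    h31, h32, h33]
  simp
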